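/- Let H ∈ (0,1), let (B_t)_{t≥0} be a fractional Brownian motion with Hurst parameter H, and let N be a standard normal random variable. Then ε^{1/H} · Σ_{n≥1} P(|B_n| > ε n^{2H}) converges to E|N|^{1/H} as ε → 0⁺. -/

import Mathlib

open MeasureTheory ProbabilityTheory Filter Real Topology

/-- A (centered) fractional Brownian motion with Hurst parameter `H`:
all finite-dimensional distributions are centered Gaussian (equivalently, every finite
linear combination of values of the process is a centered real Gaussian), with covariance
`E (B s * B t) = (s^(2H) + t^(2H) - |t-s|^(2H)) / 2` for nonnegative times. -/
structure IsFractionalBrownianMotion {Ω : Type*} [MeasureSpace Ω]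
    (B : ℝ → Ω → ℝ) (H : ℝ) : Prop where
  measurable : ∀ t : ℝ, Measurable (B t)
  gaussian_fdd : ∀ (n : ℕ) (t : Fin n → ℝ), (∀ i, 0 ≤ t i) → ∀ c : Fin n → ℝ,
    ∃ v : NNReal,
      Measure.map (fun ω => ∑ i, c i * B (t i) ω) (ℙ : Measure Ω) = gaussianReal 0 v
  covariance : ∀ s t : ℝ, 0 ≤ s → 0 ≤ t →
    ∫ ω, B s ω * B t ω ∂(ℙ : Measure Ω)
      = (s ^ (2 * H) + t ^ (2 * H) - |t - s| ^ (2 * H)) / 2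

/-- `V_n = ∑_{k=0}^{n-1} H_q (n^H (B_{(k+1)/n} - B_{k/n}))`, where `H_q` is the Hermite
polynomial of degree `q`. -/
noncomputable def hermiteVariation {Ω : Type*} [MeasureSpace Ω]
    (B : ℝ → Ω → ℝ) (H : ℝ) (q n : ℕ) (ω : Ω) : ℝ :=
  ∑ k ∈ Finset.range n,
    Polynomial.aeval
      ((n : ℝ) ^ H * (B (((k : ℝ) + 1) / n) ω - B ((k : ℝ) / n) ω))
      (Polynomial.hermite q)
open Set

/-! The variance of `B n` is `n ^ (2H)`, so `B n` has the law of `n ^ H • N` and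
`P(|B n| > ε n ^ (2H)) = P(X > δ n)` with `X = |N| ^ (1/H)` and `δ = ε ^ (1/H)`.
Since `t ↦ P(X > t)` is antitone, the integral test squeezes `δ ∑_{n ≥ 1} P(X > δ n)` between
`E X - δ` and `∫_0^∞ P(X > t) dt`, which is `E X` by the layer cake formula. -/

section TailSum

variable {α : Type*} [MeasurableSpace α] {μ : Measure α} [IsFiniteMeasure μ] {f : α → ℝ}

lemma antitone_measureReal_lt : Antitone fun t : ℝ => μ.real {a | t < f a} :=
  fun _ _ hst => measureReal_mono fun _ h => hst.trans_lt h

lemma antitone_measureReal_mul_lt {δ : ℝ} (hδ : 0 ≤ δ) :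
    Antitone fun s : ℝ => μ.real {a | δ * s < f a} :=
  antitone_measureReal_lt.comp_monotone (monotone_id.const_mul hδ)

lemma integrableOn_measureReal_lt (hf : Integrable f μ) (hf0 : 0 ≤ᵐ[μ] f) :
    IntegrableOn (fun t : ℝ => μ.real {a | t < f a}) (Ioi 0) := by
  refine ⟨antitone_measureReal_lt.measurable.aestronglyMeasurable, ?_⟩
  rw [hasFiniteIntegral_iff_ofReal (ae_of_all _ fun _ => measureReal_nonneg)]
  simp only [ofReal_measureReal (measure_ne_top μ _)]
  rw [← lintegral_eq_lintegral_meas_lt μ hf0 hf.aemeasurable]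
  exact hf.lintegral_lt_top

lemma integrableOn_measureReal_mul_lt (hf : Integrable f μ) (hf0 : 0 ≤ᵐ[μ] f) {δ : ℝ}
    (hδ : 0 < δ) : IntegrableOn (fun s : ℝ => μ.real {a | δ * s < f a}) (Ioi 0) := by
  rw [integrableOn_Ioi_comp_mul_left_iff (fun t => μ.real {a | t < f a}) 0 hδ, mul_zero]
  exact integrableOn_measureReal_lt hf hf0

omit [IsFiniteMeasure μ] in
lemma integral_Ioi_measureReal_mul_lt (hf : Integrable f μ) (hf0 : 0 ≤ᵐ[μ] f) {δ : ℝ}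
    (hδ : 0 < δ) : ∫ s in Ioi 0, μ.real {a | δ * s < f a} = δ⁻¹ * ∫ a, f a ∂μ := by
  rw [integral_comp_mul_left_Ioi (fun t => μ.real {a | t < f a}) 0 hδ, mul_zero,
    hf.integral_eq_integral_meas_lt hf0, smul_eq_mul]

lemma mul_tsum_measureReal_lt_le (hf : Integrable f μ) (hf0 : 0 ≤ᵐ[μ] f) {δ : ℝ}
    (hδ : 0 < δ) : δ * ∑' n : ℕ, μ.real {a | δ * (n + 1) < f a} ≤ ∫ a, f a ∂μ := by
  have := ((antitone_measureReal_mul_lt hδ.le).antitoneOn _).tsum_add_one_le_integral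
    (integrableOn_measureReal_mul_lt hf hf0 hδ) fun _ _ => measureReal_nonneg
  push_cast at this
  rwa [integral_Ioi_measureReal_mul_lt hf hf0 hδ, le_inv_mul_iff₀ hδ] at this

lemma integral_sub_le_mul_tsum_measureReal_lt (hf : Integrable f μ) (hf0 : 0 ≤ᵐ[μ] f) {δ : ℝ}
    (hδ : 0 < δ) :
    ∫ a, f a ∂μ - δ * μ.real univ ≤ δ * ∑' n : ℕ, μ.real {a | δ * (n + 1) < f a} := by
  have hanti := (antitone_measureReal_mul_lt (μ := μ) (f := f) hδ.le).antitoneOn (Ici 0)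
  have hsum := hanti.summable_of_integrableOn_Ioi_zero
    (integrableOn_measureReal_mul_lt hf hf0 hδ) fun _ _ => measureReal_nonneg
  have hle := hanti.integral_le_tsum hsum fun _ _ => measureReal_nonneg
  rw [hsum.tsum_eq_zero_add, integral_Ioi_measureReal_mul_lt hf hf0 hδ] at hle
  push_cast at hle
  calc ∫ a, f a ∂μ - δ * μ.real univ
      = δ * (δ⁻¹ * ∫ a, f a ∂μ) - δ * μ.real univ := by rw [mul_inv_cancel_left₀ hδ.ne']
    _ ≤ δ * (μ.real univ + ∑' n : ℕ, μ.real {a | δ * (n + 1) < f a}) - δ * μ.real univ := by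
      gcongr
      exact hle.trans (add_le_add_left (measureReal_mono (subset_univ _)) _)
    _ = δ * ∑' n : ℕ, μ.real {a | δ * (n + 1) < f a} := by ring

lemma tendsto_mul_tsum_measureReal_lt (hf : Integrable f μ) (hf0 : 0 ≤ᵐ[μ] f) :
    Tendsto (fun δ => δ * ∑' n : ℕ, μ.real {a | δ * (n + 1) < f a}) (𝓝[>] 0)
      (𝓝 (∫ a, f a ∂μ)) := by
  have hlow : Tendsto (fun δ => ∫ a, f a ∂μ - δ * μ.real univ) (𝓝[>] 0) (𝓝 (∫ a, f a ∂μ)) :=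
    ((continuous_const.sub (continuous_id.mul continuous_const)).tendsto' 0 _
      (by simp)).mono_left nhdsWithin_le_nhds
  exact tendsto_of_tendsto_of_tendsto_of_le_of_le' hlow tendsto_const_nhds
    (eventually_nhdsWithin_of_forall fun _ hδ =>
      integral_sub_le_mul_tsum_measureReal_lt hf hf0 hδ)
    (eventually_nhdsWithin_of_forall fun _ hδ => mul_tsum_measureReal_lt_le hf hf0 hδ)

end TailSum

lemma tendsto_rpow_nhdsGT_zero {p : ℝ} (hp : 0 < p) :
    Tendsto (fun x : ℝ => x ^ p) (𝓝[>] 0) (𝓝[>] 0) :=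
  tendsto_nhdsWithin_of_tendsto_nhds_of_eventually_within _
    (by simpa [zero_rpow hp.ne'] using
      (continuousAt_rpow_const 0 p (Or.inr hp.le)).tendsto.mono_left nhdsWithin_le_nhds)
    (eventually_nhdsWithin_of_forall fun x hx => rpow_pos_of_pos hx p)

lemma mul_rpow_two_mul_lt_abs_rpow_mul_iff {ε t H : ℝ} (hε : 0 < ε) (ht : 0 < t) (hH : 0 < H)
    (y : ℝ) : ε * t ^ (2 * H) < |t ^ H * y| ↔ ε ^ (1 / H) * t < |y| ^ (1 / H) := by
  have htH : 0 < t ^ H := rpow_pos_of_pos ht H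
  have hsplit : ε * t ^ (2 * H) = t ^ H * (ε * t ^ H) := by rw [two_mul, rpow_add ht]; ring
  rw [hsplit, abs_mul, abs_of_pos htH, mul_lt_mul_iff_right₀ htH,
    ← rpow_lt_rpow_iff (by positivity) (abs_nonneg y) (one_div_pos.2 hH),
    mul_rpow hε.le htH.le, ← rpow_mul ht.le, mul_one_div_cancel hH.ne', rpow_one]

lemma integrable_abs_rpow_of_map_eq_gaussianReal {Ω : Type*} [MeasurableSpace Ω]
    {μ : Measure Ω} {N : Ω → ℝ} {m : ℝ} {v : NNReal} (hN : μ.map N = gaussianReal m v) {p : ℝ}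
    (hp : 0 ≤ p) : Integrable (fun ω => |N ω| ^ p) μ := by
  have hNm : AEMeasurable N μ := aemeasurable_of_map_neZero (by rw [hN]; infer_instance)
  have hint : Integrable (fun x : ℝ => |x| ^ p) (μ.map N) := by
    simpa [hN, hp] using
      (memLp_id_gaussianReal (μ := m) (v := v) p.toNNReal).integrable_norm_rpow'
  exact (integrable_map_measure hint.aestronglyMeasurable hNm).1 hint

namespace IsFractionalBrownianMotion

variable {Ω : Type*} [MeasureSpace Ω] {B : ℝ → Ω → ℝ} {H : ℝ}

lemma map_eq_gaussianReal (hB : IsFractionalBrownianMotion B H) (hH : H ≠ 0) {t : ℝ}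
    (ht : 0 ≤ t) : Measure.map (B t) ℙ = gaussianReal 0 (t ^ (2 * H)).toNNReal := by
  obtain ⟨v, hv⟩ := hB.gaussian_fdd 1 (fun _ => t) (fun _ => ht) (fun _ => 1)
  simp only [Fin.sum_univ_one, one_mul] at hv
  change Measure.map (B t) ℙ = _ at hv
  have hBm := (hB.measurable t).aemeasurable (μ := ℙ)
  have hmean : ∫ ω, B t ω ∂ℙ = 0 := by
    rw [← integral_id_gaussianReal (μ := 0) (v := v), ← hv]
    exact (integral_map hBm aestronglyMeasurable_id).symm
  have hsecond : ∫ ω, B t ω ^ 2 ∂ℙ = t ^ (2 * H) := by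
    simp_rw [sq, hB.covariance t t ht ht, sub_self, abs_zero,
      zero_rpow (mul_ne_zero two_ne_zero hH)]
    ring
  have hvar : (v : ℝ) = t ^ (2 * H) := by
    rw [← variance_id_gaussianReal (μ := 0) (v := v), ← hv, variance_id_map hBm,
      variance_of_integral_eq_zero hBm hmean, hsecond]
  rw [hv, ← hvar, Real.toNNReal_coe]

lemma identDistrib_rpow_mul (hB : IsFractionalBrownianMotion B H) (hH : H ≠ 0) {N : Ω → ℝ}
    (hN : Measure.map N ℙ = gaussianReal 0 1) {t : ℝ} (ht : 0 ≤ t) :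
    IdentDistrib (B t) (fun ω => t ^ H * N ω) ℙ ℙ := by
  have hNm : AEMeasurable N ℙ := aemeasurable_of_map_neZero (by rw [hN]; infer_instance)
  refine ⟨(hB.measurable t).aemeasurable, hNm.const_mul _, ?_⟩
  change _ = Measure.map ((t ^ H * ·) ∘ N) ℙ
  rw [hB.map_eq_gaussianReal hH ht,
    ← (measurable_const_mul _).aemeasurable.map_map_of_aemeasurable hNm, hN,
    gaussianReal_map_const_mul, mul_zero, mul_one]
  congr
  ext
  simp [← rpow_mul_natCast ht, mul_comm, rpow_nonneg ht]

lemma measure_lt_abs_eq (hB : IsFractionalBrownianMotion B H) (hH : 0 < H) {N : Ω → ℝ}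
    (hN : Measure.map N ℙ = gaussianReal 0 1) {ε t : ℝ} (hε : 0 < ε) (ht : 0 < t) :
    ℙ {ω | ε * t ^ (2 * H) < |B t ω|} = ℙ {ω | ε ^ (1 / H) * t < |N ω| ^ (1 / H)} := by
  have hs : MeasurableSet {x : ℝ | ε * t ^ (2 * H) < |x|} :=
    measurableSet_lt measurable_const measurable_abs
  refine ((hB.identDistrib_rpow_mul hH.ne' hN ht.le).measure_mem_eq hs).trans
    (congrArg _ (Set.ext fun ω => ?_))
  exact mul_rpow_two_mul_lt_abs_rpow_mul_iff hε ht hH (N ω)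

end IsFractionalBrownianMotion

theorem stmt_15_general {Ω : Type*} [MeasureSpace Ω] [IsProbabilityMeasure (ℙ : Measure Ω)]
    (H : ℝ) (hH0 : 0 < H)
    (B : ℝ → Ω → ℝ) (hB : IsFractionalBrownianMotion B H)
    (N : Ω → ℝ) (hN : Measure.map N (ℙ : Measure Ω) = gaussianReal 0 1) :
    Tendsto
      (fun ε : ℝ =>
        ε ^ (1 / H) *
          ∑' n : ℕ,
            (ℙ {ω | ε * ((n : ℝ) + 1) ^ (2 * H) < |B ((n : ℝ) + 1) ω|}).toReal)
      (𝓝[>] 0) (𝓝 (∫ ω, |N ω| ^ (1 / H) ∂(ℙ : Measure Ω))) := by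
  have hp : 0 < 1 / H := one_div_pos.2 hH0
  have hlim := (tendsto_mul_tsum_measureReal_lt
    (integrable_abs_rpow_of_map_eq_gaussianReal hN hp.le)
    (ae_of_all _ fun ω => by positivity)).comp (tendsto_rpow_nhdsGT_zero hp)
  refine hlim.congr' (eventually_nhdsWithin_of_forall fun ε hε => ?_)
  simp only [Function.comp_apply, measureReal_def]
  congr 1
  refine tsum_congr fun n => ?_
  rw [hB.measure_lt_abs_eq hH0 hN hε (by positivity)]

theorem stmt_15 {Ω : Type*} [MeasureSpace Ω] [IsProbabilityMeasure (ℙ : Measure Ω)]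
    (H : ℝ) (hH0 : 0 < H) (hH1 : H < 1)
    (B : ℝ → Ω → ℝ) (hB : IsFractionalBrownianMotion B H)
    (N : Ω → ℝ) (hN : Measure.map N (ℙ : Measure Ω) = gaussianReal 0 1) :
    Tendsto
      (fun ε : ℝ =>
        ε ^ (1 / H) *
          ∑' n : ℕ,
            (ℙ {ω | ε * ((n : ℝ) + 1) ^ (2 * H) < |B ((n : ℝ) + 1) ω|}).toReal)
      (𝓝[>] 0) (𝓝 (∫ ω, |N ω| ^ (1 / H) ∂(ℙ : Measure Ω))) :=
  stmt_15_general H hH0 B hB N hN
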